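/- arXiv:1606.01724 — 4 statements merged into one kernel-verified Lean document; each statement's English description precedes it below -/
import Mathlib

section
/- Let a > 0 and let R(a) ∈ (0,∞] be the first zero of f(·;a), i.e. R(a) = inf{r > 0 : f(r;a) = 0} (with R(a) = ∞ if f(·;a) has no zero). Then for every r ∈ (0,R(a)) one has 0 < f(r;a) < a and -(a r / N)^{1/(p-1)} < f'(r;a) < 0; moreover, with ρ(r) = r^{N-1} e^r, the identity d/dr [ρ(r) |f'(r;a)|^{p-2} f'(r;a)] = -ρ(r) f(r;a) holds for all r ∈ (0,R(a)). -/
/-!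
Write `g = |f'|^{p-2} f'`. Where `f'` has a sign, `|f'|^{p-1} = ∓g`, and the ODE becomes linear
in `g` with integrating factor `s^{N-1} e^{±s}`: `(s^{N-1} e^{±s} g)' = -s^{N-1} e^{±s} f`, which is
negative as long as `f > 0`. This first excludes `f' > 0`: past the last zero of `f'` the weighted
flux would decrease from `0`, yet it is positive. Then `ρ g` decreases strictly from `0`, so `f' < 0`
and `f < a`. Finally, `f ≤ a` and `((a/N) s^N e^s)' > a ρ` give `ρ g > -(a/N) r^N e^r`, that is,
`|f'(r)|^{p-1} < a r / N`.
-/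

open Real Set Filter MeasureTheory

/-- `f` is a solution of the profile equation with parameter `a`:
`f` is C¹ on `[0,∞)` with derivative `f'`, the map `r ↦ |f'(r)|^{p-2} f'(r)` is C¹ on `[0,∞)`
with derivative `F'`, the ODE
`(|f'|^{p-2}f')'(r) + ((N-1)/r)(|f'|^{p-2}f')(r) + f(r) - |f'(r)|^{p-1} = 0` holds for `r > 0`,
and `f 0 = a`, `f' 0 = 0`. -/
def IsProfileSol (N : ℕ) (p a : ℝ) (f f' F' : ℝ → ℝ) : Prop :=
  (∀ r ∈ Ici (0:ℝ), HasDerivWithinAt f (f' r) (Ici 0) r) ∧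
  ContinuousOn f' (Ici 0) ∧
  (∀ r ∈ Ici (0:ℝ), HasDerivWithinAt (fun s => |f' s| ^ (p - 2) * f' s) (F' r) (Ici 0) r) ∧
  ContinuousOn F' (Ici 0) ∧
  (∀ r, 0 < r →
    F' r + (((N : ℝ) - 1) / r) * (|f' r| ^ (p - 2) * f' r) + f r - |f' r| ^ (p - 1) = 0) ∧
  f 0 = a ∧ f' 0 = 0

/-- `g(r;a) = -|f'(r;a)|^{p-2} f'(r;a)`. -/
noncomputable def gFun (p : ℝ) (f' : ℝ → ℝ) (r : ℝ) : ℝ := -(|f' r| ^ (p - 2) * f' r)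

/-- `ρ(r) = r^{N-1} e^r`. -/
noncomputable def rho (N : ℕ) (r : ℝ) : ℝ := r ^ (N - 1) * Real.exp r

/-- the derivative of `ρ`. -/
noncomputable def rho' (N : ℕ) (r : ℝ) : ℝ :=
  (((N : ℝ) - 1) * r ^ (N - 2) + r ^ (N - 1)) * Real.exp r

/-- `w(r;a) = ρ(r) g(r;a)`. -/
noncomputable def wFun (N : ℕ) (p : ℝ) (f' : ℝ → ℝ) (r : ℝ) : ℝ := rho N r * gFun p f' r

/-- the derivative `w'(r;a) = ρ'(r) g(r;a) + ρ(r) g'(r;a)`, where `g' = -F'`. -/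
noncomputable def wDeriv (N : ℕ) (p : ℝ) (f' F' : ℝ → ℝ) (r : ℝ) : ℝ :=
  rho' N r * gFun p f' r - rho N r * F' r

theorem abs_rpow_sub_two_mul_of_nonneg {p x : ℝ} (hp : p ≠ 1) (hx : 0 ≤ x) :
    |x| ^ (p - 2) * x = |x| ^ (p - 1) := by
  rw [abs_of_nonneg hx, show p - 1 = p - 2 + 1 by ring, rpow_add_one' hx (by grind)]

theorem abs_rpow_sub_two_mul_of_nonpos {p x : ℝ} (hp : p ≠ 1) (hx : x ≤ 0) :
    |x| ^ (p - 2) * x = -|x| ^ (p - 1) := by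
  have h := abs_rpow_sub_two_mul_of_nonneg hp (neg_nonneg.mpr hx)
  rw [abs_neg] at h
  linarith

theorem lt_of_hasDerivAt_neg {g g' : ℝ → ℝ} {a b : ℝ} (hab : a < b)
    (hc : ContinuousOn g (Icc a b)) (hd : ∀ x ∈ Ioo a b, HasDerivAt g (g' x) x)
    (hneg : ∀ x ∈ Ioo a b, g' x < 0) : g b < g a := by
  obtain ⟨c, hc, hslope⟩ := exists_hasDerivAt_eq_slope g g' hab hc hd
  have h := hneg c hc
  rwa [hslope, div_lt_iff₀ (sub_pos.mpr hab), zero_mul, sub_neg] at h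

theorem pos_of_forall_ne_zero {g : ℝ → ℝ} {r : ℝ} (hc : ContinuousOn g (Icc 0 r))
    (h0 : 0 < g 0) (hne : ∀ s, 0 < s → s ≤ r → g s ≠ 0) : ∀ s ∈ Icc 0 r, 0 < g s := by
  rintro s ⟨hs0, hsr⟩
  by_contra! hle
  obtain ⟨t, ⟨ht0, hts⟩, hgt⟩ := intermediate_value_Icc' hs0 (hc.mono (Icc_subset_Icc_right hsr))
    ⟨hle, h0.le⟩
  rcases ht0.eq_or_lt with rfl | ht0
  · linarith
  · exact hne t ht0 (hts.trans hsr) hgt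

theorem exists_last_zero {g : ℝ → ℝ} {a b : ℝ} (hab : a ≤ b) (hc : ContinuousOn g (Icc a b))
    (ha : g a ≤ 0) (hb : 0 < g b) : ∃ c ∈ Ico a b, g c = 0 ∧ ∀ x ∈ Ioc c b, 0 < g x := by
  have hS : IsCompact (Icc a b ∩ g ⁻¹' Iic 0) :=
    isCompact_Icc.of_isClosed_subset
      (hc.preimage_isClosed_of_isClosed isClosed_Icc isClosed_Iic) inter_subset_left
  obtain ⟨c, ⟨hcI, hgc⟩, hmax⟩ := hS.exists_isGreatest ⟨a, ⟨left_mem_Icc.mpr hab, ha⟩⟩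
  have hcb : c < b := hcI.2.lt_of_ne (by rintro rfl; exact hgc.not_gt hb)
  have hlast : ∀ x ∈ Ioc c b, 0 < g x := fun x hx =>
    lt_of_not_ge fun hx0 => (hmax ⟨⟨hcI.1.trans hx.1.le, hx.2⟩, hx0⟩).not_gt hx.1
  obtain ⟨y, hy, hgy⟩ := intermediate_value_Icc hcb.le (hc.mono (Icc_subset_Icc_left hcI.1))
    ⟨hgc, hb.le⟩
  have hyc : y = c := le_antisymm (hmax ⟨⟨hcI.1.trans hy.1, hy.2⟩, hgy.le⟩) hy.1
  exact ⟨c, ⟨hcI.1, hcb⟩, hyc ▸ hgy, hlast⟩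

theorem rho_pos (N : ℕ) {t : ℝ} (ht : 0 < t) : 0 < rho N t := by
  unfold rho
  positivity

theorem hasDerivAt_pow_mul_exp_mul {N : ℕ} (hN : 1 ≤ N) (c : ℝ) {t : ℝ} (ht : t ≠ 0) :
    HasDerivAt (fun s => s ^ (N - 1) * exp (c * s))
      ((((N : ℝ) - 1) / t + c) * (t ^ (N - 1) * exp (c * t))) t := by
  obtain ⟨n, rfl⟩ := Nat.exists_eq_add_of_le' hN
  simp only [Nat.add_sub_cancel, Nat.cast_add, Nat.cast_one, add_sub_cancel_right]
  refine ((hasDerivAt_pow n t).mul ((hasDerivAt_id t).const_mul c).exp).congr_deriv ?_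
  rcases n with _ | n
  · simp [mul_comm]
  · simp only [Nat.add_sub_cancel, pow_succ, id]
    field_simp

namespace IsProfileSol

variable {N : ℕ} {p a : ℝ} {f f' F' : ℝ → ℝ}

theorem hasDerivAt (hf : IsProfileSol N p a f f' F') {t : ℝ} (ht : 0 < t) :
    HasDerivAt f (f' t) t :=
  (hf.1 t ht.le).hasDerivAt (Ici_mem_nhds ht)

theorem hasDerivAt_flux (hf : IsProfileSol N p a f f' F') {t : ℝ} (ht : 0 < t) :
    HasDerivAt (fun s => |f' s| ^ (p - 2) * f' s) (F' t) t :=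
  (hf.2.2.1 t ht.le).hasDerivAt (Ici_mem_nhds ht)

theorem initial_value (hf : IsProfileSol N p a f f' F') : f 0 = a := hf.2.2.2.2.2.1

theorem initial_deriv (hf : IsProfileSol N p a f f' F') : f' 0 = 0 := hf.2.2.2.2.2.2

theorem ode (hf : IsProfileSol N p a f f' F') {t : ℝ} (ht : 0 < t) :
    F' t + (((N : ℝ) - 1) / t) * (|f' t| ^ (p - 2) * f' t) + f t - |f' t| ^ (p - 1) = 0 :=
  hf.2.2.2.2.1 t ht

theorem continuousOn_deriv (hf : IsProfileSol N p a f f' F') : ContinuousOn f' (Ici 0) := hf.2.1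

theorem continuousOn (hf : IsProfileSol N p a f f' F') : ContinuousOn f (Ici 0) :=
  fun s hs => (hf.1 s hs).continuousWithinAt

theorem continuousOn_flux (hf : IsProfileSol N p a f f' F') :
    ContinuousOn (fun s => |f' s| ^ (p - 2) * f' s) (Ici 0) :=
  fun s hs => (hf.2.2.1 s hs).continuousWithinAt

theorem flux_zero (hf : IsProfileSol N p a f f' F') : |f' 0| ^ (p - 2) * f' 0 = 0 := by
  rw [hf.initial_deriv, mul_zero]

theorem hasDerivAt_weighted_flux (hf : IsProfileSol N p a f f' F') (hN : 1 ≤ N) {c t : ℝ}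
    (ht : 0 < t) (hc : |f' t| ^ (p - 1) = -c * (|f' t| ^ (p - 2) * f' t)) :
    HasDerivAt (fun s => s ^ (N - 1) * exp (c * s) * (|f' s| ^ (p - 2) * f' s))
      (-(t ^ (N - 1) * exp (c * t) * f t)) t := by
  refine ((hasDerivAt_pow_mul_exp_mul hN c ht.ne').mul (hf.hasDerivAt_flux ht)).congr_deriv ?_
  have hode := hf.ode ht
  rw [hc] at hode
  linear_combination (t ^ (N - 1) * exp (c * t)) * hode

theorem continuousOn_weighted_flux (hf : IsProfileSol N p a f f' F') (c : ℝ) :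
    ContinuousOn (fun s => s ^ (N - 1) * exp (c * s) * (|f' s| ^ (p - 2) * f' s)) (Ici 0) :=
  (by fun_prop : Continuous fun s : ℝ => s ^ (N - 1) * exp (c * s)).continuousOn.mul
    hf.continuousOn_flux

theorem deriv_nonpos (hf : IsProfileSol N p a f f' F') (hN : 1 ≤ N) (hp : p ≠ 1) {r : ℝ}
    (hpos : ∀ s ∈ Icc 0 r, 0 < f s) : ∀ s ∈ Icc 0 r, f' s ≤ 0 := by
  rintro s₀ ⟨hs₀0, hs₀r⟩
  by_contra! hs₀
  obtain ⟨c, ⟨hc0, hcs₀⟩, hf'c, hf'pos⟩ :=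
    exists_last_zero hs₀0 (hf.continuousOn_deriv.mono Icc_subset_Ici_self) hf.initial_deriv.le hs₀
  set v := fun s => s ^ (N - 1) * exp (-1 * s) * (|f' s| ^ (p - 2) * f' s)
  have hdec : v s₀ < v c := by
    refine lt_of_hasDerivAt_neg hcs₀ ((hf.continuousOn_weighted_flux (-1)).mono
      fun x hx => hc0.trans hx.1) (fun t ht => hf.hasDerivAt_weighted_flux hN (hc0.trans_lt ht.1)
        ?_) fun t ht => ?_
    · rw [abs_rpow_sub_two_mul_of_nonneg hp (hf'pos t ⟨ht.1, ht.2.le⟩).le]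
      ring
    · have ht0 := hc0.trans_lt ht.1
      have := hpos t ⟨ht0.le, ht.2.le.trans hs₀r⟩
      have : 0 < t ^ (N - 1) * exp (-1 * t) * f t := by positivity
      linarith
  have hvc : v c = 0 := by simp [v, hf'c]
  have hvs₀ : 0 < v s₀ := by
    have := hc0.trans_lt hcs₀
    exact mul_pos (by positivity) (mul_pos (rpow_pos_of_pos (abs_pos.mpr hs₀.ne') _) hs₀)
  linarith

theorem hasDerivAt_rho_mul_flux (hf : IsProfileSol N p a f f' F') (hN : 1 ≤ N) (hp : p ≠ 1)
    {t : ℝ} (ht : 0 < t) (hf't : f' t ≤ 0) :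
    HasDerivAt (fun s => rho N s * (|f' s| ^ (p - 2) * f' s)) (-(rho N t * f t)) t := by
  have h := hf.hasDerivAt_weighted_flux hN (c := 1) ht
    (by rw [abs_rpow_sub_two_mul_of_nonpos hp hf't]; ring)
  simpa only [one_mul, rho] using h

theorem continuousOn_rho_mul_flux (hf : IsProfileSol N p a f f' F') :
    ContinuousOn (fun s => rho N s * (|f' s| ^ (p - 2) * f' s)) (Ici 0) := by
  simpa only [one_mul, rho] using hf.continuousOn_weighted_flux 1

theorem deriv_neg (hf : IsProfileSol N p a f f' F') (hN : 1 ≤ N) (hp : p ≠ 1) {r : ℝ}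
    (hpos : ∀ s ∈ Icc 0 r, 0 < f s) : ∀ t ∈ Ioc 0 r, f' t < 0 := by
  rintro t ⟨ht0, htr⟩
  have hnonpos := hf.deriv_nonpos hN hp hpos
  have hw : rho N t * (|f' t| ^ (p - 2) * f' t) < rho N 0 * (|f' 0| ^ (p - 2) * f' 0) := by
    refine lt_of_hasDerivAt_neg ht0 (hf.continuousOn_rho_mul_flux.mono Icc_subset_Ici_self)
      (fun s hs => hf.hasDerivAt_rho_mul_flux hN hp hs.1 (hnonpos s ⟨hs.1.le, ?_⟩)) fun s hs => ?_
    · exact hs.2.le.trans htr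
    · have := hpos s ⟨hs.1.le, hs.2.le.trans htr⟩
      have := mul_pos (rho_pos N hs.1) this
      linarith
  rw [hf.flux_zero, mul_zero] at hw
  refine (hnonpos t ⟨ht0.le, htr⟩).lt_of_ne fun h => ?_
  simp [h] at hw

theorem lt_initial_value (hf : IsProfileSol N p a f f' F') {r : ℝ} (hneg : ∀ t ∈ Ioc 0 r, f' t < 0) :
    ∀ t ∈ Ioc 0 r, f t < a := by
  rintro t ⟨ht0, htr⟩
  rw [← hf.initial_value]
  exact lt_of_hasDerivAt_neg ht0 (hf.continuousOn.mono Icc_subset_Ici_self)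
    (fun s hs => hf.hasDerivAt hs.1) fun s hs => hneg s ⟨hs.1, hs.2.le.trans htr⟩

theorem neg_lt_flux (hf : IsProfileSol N p a f f' F') (hN : 1 ≤ N) (hp : p ≠ 1) (ha : 0 < a)
    {r : ℝ} (hr : 0 < r) (hle : ∀ t ∈ Ioo 0 r, f t ≤ a) (hnonpos : ∀ t ∈ Ioc 0 r, f' t ≤ 0) :
    -(a * r / N) < |f' r| ^ (p - 2) * f' r := by
  have hpow : r ^ N = r ^ (N - 1) * r := by rw [← pow_succ, Nat.sub_add_cancel hN]
  set g := fun s => -(a / N) * (s ^ N * exp s) - rho N s * (|f' s| ^ (p - 2) * f' s)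
  have hdec : g r < g 0 := by
    refine lt_of_hasDerivAt_neg hr (((by fun_prop : Continuous fun s : ℝ =>
      -(a / N) * (s ^ N * exp s)).continuousOn).sub
        (hf.continuousOn_rho_mul_flux.mono Icc_subset_Ici_self))
      (fun t ht => (((hasDerivAt_pow N t).mul (hasDerivAt_exp t)).const_mul _).sub
        (hf.hasDerivAt_rho_mul_flux hN hp ht.1 (hnonpos t ⟨ht.1, ht.2.le⟩))) fun t ht => ?_
    have hfa : rho N t * (f t - a) ≤ 0 :=
      mul_nonpos_of_nonneg_of_nonpos (rho_pos N ht.1).le (sub_nonpos.mpr (hle t ht))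
    have : 0 < a / N * (t ^ N * exp t) := by have := ht.1; positivity
    calc _ = rho N t * (f t - a) - a / N * (t ^ N * exp t) := by
          rw [rho]
          field_simp
          ring
      _ < 0 := by linarith
  have hg0 : g 0 = 0 := by
    simp [g, hf.flux_zero, zero_pow (by omega : N ≠ 0)]
  have key : rho N r * (-(a * r / N)) < rho N r * (|f' r| ^ (p - 2) * f' r) := by
    have hrr : rho N r * (-(a * r / N)) = -(a / N) * (r ^ N * exp r) := by
      rw [hpow, rho]; ring
    simp only [g] at hdec
    linarith
  exact lt_of_mul_lt_mul_left key (rho_pos N hr).le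

theorem neg_rpow_lt_deriv (hf : IsProfileSol N p a f f' F') (hN : 1 ≤ N) (hp : 1 < p)
    (ha : 0 < a) {r : ℝ} (hr : 0 < r) (hle : ∀ t ∈ Ioo 0 r, f t ≤ a)
    (hnonpos : ∀ t ∈ Ioc 0 r, f' t ≤ 0) : -((a * r / N) ^ (1 / (p - 1))) < f' r := by
  have h := hf.neg_lt_flux hN hp.ne' ha hr hle hnonpos
  rw [abs_rpow_sub_two_mul_of_nonpos hp.ne' (hnonpos r ⟨hr, le_rfl⟩), neg_lt_neg_iff] at h
  rw [neg_lt, ← abs_of_nonpos (hnonpos r ⟨hr, le_rfl⟩), one_div,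
    lt_rpow_inv_iff_of_pos (abs_nonneg _) (by positivity) (by linarith)]
  exact h

end IsProfileSol

theorem stmt4_general (N : ℕ) (hN : 2 ≤ N) (p : ℝ)
    (hp1 : 2 * (N : ℝ) / ((N : ℝ) + 1) < p)
    (a : ℝ) (ha : 0 < a)
    (f f' F' : ℝ → ℝ) (hf : IsProfileSol N p a f f' F') :
    ∀ r, 0 < r → (∀ s, 0 < s → s ≤ r → f s ≠ 0) →
      (0 < f r ∧ f r < a) ∧
      (-((a * r / (N : ℝ)) ^ (1 / (p - 1))) < f' r ∧ f' r < 0) ∧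
      HasDerivAt (fun s => rho N s * (|f' s| ^ (p - 2) * f' s)) (-(rho N r * f r)) r := by
  intro r hr hne
  have hN1 : 1 ≤ N := by omega
  have hp : 1 < p := by
    refine lt_of_le_of_lt ?_ hp1
    rw [le_div_iff₀ (by positivity)]
    linarith [(by exact_mod_cast hN1 : (1 : ℝ) ≤ N)]
  have hpos : ∀ s ∈ Icc 0 r, 0 < f s := pos_of_forall_ne_zero
    (hf.continuousOn.mono Icc_subset_Ici_self) (hf.initial_value ▸ ha) hne
  have hneg : ∀ t ∈ Ioc 0 r, f' t < 0 := hf.deriv_neg hN1 hp.ne' hpos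
  have hlt : ∀ t ∈ Ioc 0 r, f t < a := hf.lt_initial_value hneg
  refine ⟨⟨hpos r ⟨hr.le, le_rfl⟩, hlt r ⟨hr, le_rfl⟩⟩, ⟨?_, hneg r ⟨hr, le_rfl⟩⟩,
    hf.hasDerivAt_rho_mul_flux hN1 hp.ne' hr (hneg r ⟨hr, le_rfl⟩).le⟩
  exact hf.neg_rpow_lt_deriv hN1 hp ha hr (fun t ht => (hlt t (Ioo_subset_Ioc_self ht)).le)
    fun t ht => (hneg t ht).le

/-- on `(0, R(a))` (i.e. for `r > 0` such that `f(·;a)` has no zero on `(0,r]`)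
one has `0 < f(r;a) < a`, `-(ar/N)^{1/(p-1)} < f'(r;a) < 0`, and
`(ρ |f'|^{p-2} f')'(r) = -ρ(r) f(r;a)`. -/
theorem stmt4 (N : ℕ) (hN : 2 ≤ N) (p : ℝ)
    (hp1 : 2 * (N : ℝ) / ((N : ℝ) + 1) < p) (hp2 : p < 2)
    (a : ℝ) (ha : 0 < a)
    (f f' F' : ℝ → ℝ) (hf : IsProfileSol N p a f f' F') :
    ∀ r, 0 < r → (∀ s, 0 < s → s ≤ r → f s ≠ 0) →
      (0 < f r ∧ f r < a) ∧
      (-((a * r / (N : ℝ)) ^ (1 / (p - 1))) < f' r ∧ f' r < 0) ∧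
      HasDerivAt (fun s => rho N s * (|f' s| ^ (p - 2) * f' s)) (-(rho N r * f r)) r :=
  stmt4_general N hN p hp1 a ha f f' F' hf
end

section
/- Let a > 0. Then g(r;a) > 0 for all r ∈ (0,∞) if and only if w'(r;a) > 0 for all r ∈ (0,∞), where g(r;a) = -|f'(r;a)|^{p-2} f'(r;a) and w(r;a) = ρ(r) g(r;a) with ρ(r) = r^{N-1} e^r. -/
open Real Set Filter MeasureTheory

/-!
The profile equation gives `w' = ρ (g + f - |f'|^{p-1})`, and `g = |f'|^{p-1}` wherever `f' < 0`.
If `w' > 0`, then `w` increases from `w(0) = 0`, so `w = ρ g > 0`. Conversely, if `g > 0`, then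
`f' < 0`, so `f` decreases and `w' = ρ f`. Were `f(r) ≤ 0` for some `r`, then beyond `r + 1` the
derivative `w'` would stay below the negative constant `ρ(r+1) f(r+1)`, eventually making `w = ρ g`
negative; hence `f > 0` and `w' > 0`.
-/

lemma rho_pos_s7 (N : ℕ) {r : ℝ} (hr : 0 < r) : 0 < rho N r :=
  mul_pos (pow_pos hr _) (exp_pos r)

lemma rho_zero {N : ℕ} (hN : 2 ≤ N) : rho N 0 = 0 := by
  simp [rho, zero_pow (show N - 1 ≠ 0 by omega)]

lemma monotoneOn_rho (N : ℕ) : MonotoneOn (rho N) (Ici 0) := fun _ hr _ _ hrs =>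
  mul_le_mul (pow_le_pow_left₀ hr hrs _) (exp_le_exp.2 hrs) (exp_pos _).le
    (pow_nonneg (le_trans hr hrs) _)

lemma hasDerivAt_rho {N : ℕ} (hN : 1 ≤ N) (r : ℝ) : HasDerivAt (rho N) (rho' N r) r := by
  refine ((hasDerivAt_pow (N - 1) r).mul (hasDerivAt_exp r)).congr_deriv ?_
  rw [rho', show N - 1 - 1 = N - 2 by omega, Nat.cast_sub hN, Nat.cast_one]
  ring

lemma rho'_eq {N : ℕ} (hN : 1 ≤ N) {r : ℝ} (hr : 0 < r) :
    rho' N r = ((N : ℝ) - 1) / r * rho N r + rho N r := by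
  obtain ⟨m, rfl⟩ : ∃ m, N = m + 1 := ⟨N - 1, by omega⟩
  rcases m with _ | m
  · simp [rho, rho']
  · simp only [rho, rho', show m + 1 + 1 - 1 = m + 1 by omega,
      show m + 1 + 1 - 2 = m by omega, pow_succ]
    field_simp

lemma gFun_eq_of_neg (p : ℝ) {f' : ℝ → ℝ} {r : ℝ} (h : f' r < 0) :
    gFun p f' r = |f' r| ^ (p - 1) := by
  have hpos : 0 < |f' r| := abs_pos.2 h.ne
  rw [gFun, show p - 1 = p - 2 + 1 by ring, rpow_add_one hpos.ne', abs_of_neg h]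
  ring

lemma neg_of_gFun_pos {p : ℝ} {f' : ℝ → ℝ} {r : ℝ} (h : 0 < gFun p f' r) : f' r < 0 := by
  by_contra! hc
  have : 0 ≤ |f' r| ^ (p - 2) * f' r := mul_nonneg (rpow_nonneg (abs_nonneg _) _) hc
  rw [gFun] at h
  linarith

lemma hasDerivWithinAt_wFun {N : ℕ} (hN : 1 ≤ N) {p : ℝ} {f' F' : ℝ → ℝ}
    (hF : ∀ r ∈ Ici (0:ℝ),
      HasDerivWithinAt (fun s => |f' s| ^ (p - 2) * f' s) (F' r) (Ici 0) r)
    {r : ℝ} (hr : r ∈ Ici (0:ℝ)) :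
    HasDerivWithinAt (wFun N p f') (wDeriv N p f' F' r) (Ici 0) r :=
  ((hasDerivAt_rho hN r).hasDerivWithinAt.mul (hF r hr).neg).congr_deriv
    (by simp only [wDeriv, gFun, Pi.neg_apply]; ring)

lemma exists_neg_of_hasDerivWithinAt_le_neg {w w' : ℝ → ℝ} {a c : ℝ} (hc : c < 0)
    (hw : ∀ x ∈ Ici a, HasDerivWithinAt w (w' x) (Ici a) x) (hle : ∀ x ∈ Ici a, w' x ≤ c) :
    ∃ R, a ≤ R ∧ w R < 0 := by
  set R := a + (|w a| + 1) / -c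
  have haR : a ≤ R := le_add_of_nonneg_right (div_nonneg (by positivity) (by linarith))
  have hlin : w R ≤ w a + c * (R - a) :=
    image_le_of_deriv_right_le_deriv_boundary (b := R) (B := fun x => w a + c * (x - a))
      (fun x hx => (hw x hx.1).continuousWithinAt.mono Icc_subset_Ici_self)
      (fun x hx => (hw x hx.1).mono (Ici_subset_Ici.2 hx.1)) (by simp) (by fun_prop)
      (fun x _ => ((hasDerivAt_id x).sub_const a).const_mul c |>.const_add (w a)
        |>.hasDerivWithinAt)
      (fun x hx => by simpa using hle x hx.1) ⟨haR, le_rfl⟩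
  have hcR : c * (R - a) = -(|w a| + 1) := by
    simp only [R, add_sub_cancel_left]
    field_simp [hc.ne]
  exact ⟨R, haR, by linarith [le_abs_self (w a)]⟩

namespace IsProfileSol

variable {N : ℕ} {p a : ℝ} {f f' F' : ℝ → ℝ}

lemma wDeriv_eq (hf : IsProfileSol N p a f f' F') (hN : 1 ≤ N) {r : ℝ} (hr : 0 < r) :
    wDeriv N p f' F' r = rho N r * (gFun p f' r + f r - |f' r| ^ (p - 1)) := by
  have hF' : F' r = ((N : ℝ) - 1) / r * gFun p f' r - f r + |f' r| ^ (p - 1) := by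
    rw [gFun]
    linear_combination hf.2.2.2.2.1 r hr
  rw [wDeriv, hF', rho'_eq hN hr]
  ring

lemma wDeriv_eq_of_gFun_pos (hf : IsProfileSol N p a f f' F') (hN : 1 ≤ N) {r : ℝ} (hr : 0 < r)
    (hg : 0 < gFun p f' r) : wDeriv N p f' F' r = rho N r * f r := by
  rw [hf.wDeriv_eq hN hr, gFun_eq_of_neg p (neg_of_gFun_pos hg)]
  ring

lemma strictAntiOn_of_gFun_pos (hf : IsProfileSol N p a f f' F')
    (hg : ∀ r, 0 < r → 0 < gFun p f' r) : StrictAntiOn f (Ici 0) := by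
  have hIoi : Ioi (0:ℝ) ⊆ Ici 0 := Ioi_subset_Ici le_rfl
  refine strictAntiOn_of_hasDerivWithinAt_neg (convex_Ici 0)
    (fun r hr => (hf.1 r hr).continuousWithinAt) (f' := f') ?_ ?_
  · intro x hx
    rw [interior_Ici] at hx ⊢
    exact (hf.1 x (hIoi hx)).mono hIoi
  · intro x hx
    rw [interior_Ici] at hx
    exact neg_of_gFun_pos (hg x hx)

lemma pos_of_gFun_pos (hf : IsProfileSol N p a f f' F') (hN : 1 ≤ N)
    (hg : ∀ r, 0 < r → 0 < gFun p f' r) {r : ℝ} (hr : 0 < r) : 0 < f r := by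
  have hanti := hf.strictAntiOn_of_gFun_pos hg
  by_contra! hfr
  set r₁ := r + 1
  have hr₁ : 0 < r₁ := by positivity
  have hfr₁ : f r₁ < 0 := (hanti (le_of_lt hr) hr₁.le (by simp [r₁])).trans_le hfr
  have hbound : ∀ s ∈ Ici r₁, wDeriv N p f' F' s ≤ rho N r₁ * f r₁ := fun s hs => by
    have hs0 : 0 < s := hr₁.trans_le hs
    rw [hf.wDeriv_eq_of_gFun_pos hN hs0 (hg s hs0)]
    calc rho N s * f s ≤ rho N s * f r₁ :=
          mul_le_mul_of_nonneg_left (hanti.antitoneOn hr₁.le hs0.le hs) (rho_pos_s7 N hs0).le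
      _ ≤ rho N r₁ * f r₁ :=
          mul_le_mul_of_nonpos_right (monotoneOn_rho N hr₁.le hs0.le hs) hfr₁.le
  obtain ⟨R, hR, hwR⟩ := exists_neg_of_hasDerivWithinAt_le_neg
    (mul_neg_of_pos_of_neg (rho_pos_s7 N hr₁) hfr₁)
    (fun x hx => (hasDerivWithinAt_wFun hN hf.2.2.1 (hr₁.le.trans hx)).mono
      (Ici_subset_Ici.2 hr₁.le)) hbound
  have hR0 : 0 < R := hr₁.trans_le hR
  exact hwR.not_gt (mul_pos (rho_pos_s7 N hR0) (hg R hR0))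

lemma gFun_pos_of_wDeriv_pos (hf : IsProfileSol N p a f f' F') (hN : 2 ≤ N)
    (hw : ∀ r, 0 < r → 0 < wDeriv N p f' F' r) {r : ℝ} (hr : 0 < r) : 0 < gFun p f' r := by
  have hwd := fun x (hx : x ∈ Ici (0:ℝ)) => hasDerivWithinAt_wFun (by omega : 1 ≤ N) hf.2.2.1 hx
  have hmono : StrictMonoOn (wFun N p f') (Ici 0) := by
    refine strictMonoOn_of_hasDerivWithinAt_pos (convex_Ici 0)
      (fun x hx => (hwd x hx).continuousWithinAt) (f' := wDeriv N p f' F') ?_ ?_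
    · intro x hx
      rw [interior_Ici] at hx ⊢
      exact (hwd x (le_of_lt hx : (0:ℝ) ≤ x)).mono (Ioi_subset_Ici le_rfl)
    · intro x hx
      rw [interior_Ici] at hx
      exact hw x hx
  have hwr : 0 < wFun N p f' r := by
    simpa [wFun, rho_zero hN] using hmono self_mem_Ici (le_of_lt hr) hr
  exact pos_of_mul_pos_right hwr (rho_pos_s7 N hr).le

end IsProfileSol

theorem stmt7_general (N : ℕ) (hN : 2 ≤ N) (p : ℝ)
    (a : ℝ)
    (f f' F' : ℝ → ℝ) (hf : IsProfileSol N p a f f' F') :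
    (∀ r, 0 < r → 0 < gFun p f' r) ↔ (∀ r, 0 < r → 0 < wDeriv N p f' F' r) := by
  have hN₁ : 1 ≤ N := by omega
  refine ⟨fun hg r hr => ?_, fun hw r hr => hf.gFun_pos_of_wDeriv_pos hN hw hr⟩
  rw [hf.wDeriv_eq_of_gFun_pos hN₁ hr (hg r hr)]
  exact mul_pos (rho_pos_s7 N hr) (hf.pos_of_gFun_pos hN₁ hg hr)

/-- `g(·;a) > 0` on `(0,∞)` iff `w'(·;a) > 0` on `(0,∞)`. -/
theorem stmt7 (N : ℕ) (hN : 2 ≤ N) (p : ℝ)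
    (hp1 : 2 * (N : ℝ) / ((N : ℝ) + 1) < p) (hp2 : p < 2)
    (a : ℝ) (ha : 0 < a)
    (f f' F' : ℝ → ℝ) (hf : IsProfileSol N p a f f' F') :
    (∀ r, 0 < r → 0 < gFun p f' r) ↔ (∀ r, 0 < r → 0 < wDeriv N p f' F' r) :=
  stmt7_general N hN p a f f' F' hf
end

section
/- Let N ≥ 2 be an integer and p ∈ (2N/(N+1), 2). Define the cubic polynomial P(z) = M_3(N-1)z³ + M_2(N-1)z² + M_1(N-1)z + M_0, where M_3 = (3p-2)² + (N-1)(3p-2)(3p-4) - 2(p-1)(2-p)(N-1)², M_2 = (3p-2)(3p-4) - 6(N-1)(p-1)(2-p), M_1 = -6(p-1)(2-p), and M_0 = -2(p-1)(2-p). Then M_3 > 0 and P has exactly one positive real root; consequently there exists r_G > 0 such that P(1/r) > 0 for r ∈ (0,r_G) and P(1/r) < 0 for r > r_G. -/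
open Real Set Filter MeasureTheory

def M3 (N : ℕ) (p : ℝ) : ℝ :=
  (3 * p - 2) ^ 2 + ((N : ℝ) - 1) * (3 * p - 2) * (3 * p - 4)
    - 2 * (p - 1) * (2 - p) * ((N : ℝ) - 1) ^ 2

def M2 (N : ℕ) (p : ℝ) : ℝ := (3 * p - 2) * (3 * p - 4) - 6 * ((N : ℝ) - 1) * (p - 1) * (2 - p)

def M1 (p : ℝ) : ℝ := -(6 * (p - 1) * (2 - p))

def M0 (p : ℝ) : ℝ := -(2 * (p - 1) * (2 - p))

/-- The cubic polynomial `P(z) = M₃(N-1)z³ + M₂(N-1)z² + M₁(N-1)z + M₀`. -/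
def Pcub (N : ℕ) (p z : ℝ) : ℝ :=
  M3 N p * ((N : ℝ) - 1) * z ^ 3 + M2 N p * ((N : ℝ) - 1) * z ^ 2
    + M1 p * ((N : ℝ) - 1) * z + M0 p

private lemma cubic_unique_aux (a b c d z1 z2 : ℝ) (ha : 0 < a) (hc : c < 0) (hd : d < 0)
    (h1 : 0 < z1) (h2 : 0 < z2)
    (e1 : a*z1^3 + b*z1^2 + c*z1 + d = 0) (e2 : a*z2^3 + b*z2^2 + c*z2 + d = 0) :
    z1 = z2 := by
  have key : (z1 - z2) * (a*z1^2*z2^2 - c*(z1*z2) - d*(z1+z2)) = 0 := by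
    linear_combination z2^2 * e1 - z1^2 * e2
  have hpos : 0 < a*z1^2*z2^2 - c*(z1*z2) - d*(z1+z2) := by
    nlinarith [mul_pos (mul_pos ha (pow_pos h1 2)) (pow_pos h2 2), mul_pos h1 h2]
  rcases mul_eq_zero.mp key with h | h
  · linarith [sub_eq_zero.mp h]
  · linarith

private lemma cubic_pos_large_aux (a b c d z : ℝ) (ha : 0 < a) (hz1 : 1 ≤ z)
    (hz2 : (|b| + |c| + |d| + 1) / a ≤ z) :
    0 < a*z^3 + b*z^2 + c*z + d := by
  have haz : |b| + |c| + |d| + 1 ≤ a * z := by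
    rwa [div_le_iff₀ ha, mul_comm] at hz2
  have hz0 : 0 < z := lt_of_lt_of_le one_pos hz1
  nlinarith [neg_abs_le b, neg_abs_le c, neg_abs_le d, abs_nonneg b, abs_nonneg c, abs_nonneg d,
    mul_nonneg (sub_nonneg.mpr haz) (sq_nonneg z),
    mul_nonneg (abs_nonneg c) (mul_nonneg (le_of_lt hz0) (sub_nonneg.mpr hz1)),
    mul_nonneg (abs_nonneg d) (sub_nonneg.mpr hz1),
    sq_nonneg (z-1), mul_pos hz0 hz0]

/-- `M₃ > 0`, the cubic `P` has exactly one positive real root, and there is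
`r_G > 0` with `P(1/r) > 0` on `(0, r_G)` and `P(1/r) < 0` on `(r_G, ∞)`. -/
theorem stmt13 (N : ℕ) (hN : 2 ≤ N) (p : ℝ)
    (hp1 : 2 * (N : ℝ) / ((N : ℝ) + 1) < p) (hp2 : p < 2) :
    0 < M3 N p ∧
    (∃! z : ℝ, 0 < z ∧ Pcub N p z = 0) ∧
    ∃ rG : ℝ, 0 < rG ∧ (∀ r, 0 < r → r < rG → 0 < Pcub N p (1 / r)) ∧
      (∀ r, rG < r → Pcub N p (1 / r) < 0) := by
  have hN1 : (1:ℝ) ≤ (N:ℝ) - 1 := by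
    have : (2:ℝ) ≤ (N:ℝ) := by exact_mod_cast hN
    linarith
  have hNpos : (0:ℝ) < (N:ℝ) + 1 := by linarith
  have hkey : ((N:ℝ)-1) * (2-p) < 2*(p-1) := by
    have h := (div_lt_iff₀ hNpos).mp hp1
    nlinarith
  have hp1' : 1 < p := by nlinarith
  set A := M3 N p * ((N:ℝ)-1) with hA
  set B := M2 N p * ((N:ℝ)-1) with hB
  set C := M1 p * ((N:ℝ)-1) with hC
  set D := M0 p with hD
  have hM3 : 0 < M3 N p := by
    unfold M3
    nlinarith [mul_pos (sub_pos.mpr hkey) (mul_pos (sub_pos.mpr hp1') (sub_pos.mpr hp2)),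
      mul_pos (sub_pos.mpr hkey) (pow_pos (lt_trans one_pos hp1') 3),
      mul_nonneg (mul_nonneg (le_of_lt (sub_pos.mpr hkey)) (le_trans zero_le_one hN1)) (sq_nonneg (3*p-2)),
      mul_pos (mul_pos (sub_pos.mpr hp1') (sub_pos.mpr hp2))
        (mul_pos (sub_pos.mpr hkey) (lt_of_lt_of_le one_pos hN1)),
      sq_nonneg (3*p-2), mul_pos (sub_pos.mpr hp1') (sub_pos.mpr hp2)]
  have hApos : 0 < A := by
    rw [hA]; exact mul_pos hM3 (by linarith)
  have hCneg : C < 0 := by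
    rw [hC]; unfold M1; nlinarith [mul_pos (sub_pos.mpr hp1') (sub_pos.mpr hp2)]
  have hDneg : D < 0 := by
    rw [hD]; unfold M0; nlinarith [mul_pos (sub_pos.mpr hp1') (sub_pos.mpr hp2)]
  have hPeq : ∀ z, Pcub N p z = A*z^3 + B*z^2 + C*z + D := by
    intro z; rw [hA, hB, hC, hD]; unfold Pcub; ring
  have hcont : Continuous (Pcub N p) := by
    have : Pcub N p = fun z => A*z^3 + B*z^2 + C*z + D := funext hPeq
    rw [this]; fun_prop
  have hP0 : Pcub N p 0 = D := by rw [hPeq]; ring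
  -- uniqueness of positive roots
  have huniq : ∀ z1 z2 : ℝ, 0 < z1 → 0 < z2 → Pcub N p z1 = 0 → Pcub N p z2 = 0 → z1 = z2 := by
    intro z1 z2 h1 h2 e1 e2
    rw [hPeq] at e1 e2
    exact cubic_unique_aux A B C D z1 z2 hApos hCneg hDneg h1 h2 e1 e2
  -- positivity for large z
  set T : ℝ := max 1 ((|B| + |C| + |D| + 1) / A) with hT
  have hT1 : (1:ℝ) ≤ T := le_max_left _ _
  have hlarge : ∀ z, T ≤ z → 0 < Pcub N p z := by
    intro z hz
    rw [hPeq]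
    exact cubic_pos_large_aux A B C D z hApos (le_trans hT1 hz)
      (le_trans (le_max_right _ _) hz)
  have hT0 : (0:ℝ) ≤ T := by linarith
  -- existence of a root
  obtain ⟨z0, hz0mem, hz0root⟩ :
      ∃ z0 ∈ Icc (0:ℝ) T, Pcub N p z0 = 0 := by
    have hmem : (0:ℝ) ∈ Icc (Pcub N p 0) (Pcub N p T) :=
      ⟨by rw [hP0]; linarith, le_of_lt (hlarge T le_rfl)⟩
    obtain ⟨z0, hz0, hval⟩ := intermediate_value_Icc hT0 hcont.continuousOn hmem
    exact ⟨z0, hz0, hval⟩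
  have hz0pos : 0 < z0 := by
    rcases hz0mem.1.lt_or_eq with h | h
    · exact h
    · exfalso; rw [← h, hP0] at hz0root; linarith
  -- sign on the right of z0
  have hpos : ∀ z, z0 < z → 0 < Pcub N p z := by
    intro z hz
    by_contra h
    push_neg at h
    rcases h.lt_or_eq with hlt | heq
    · -- Pcub z < 0; find a root beyond z
      have hzT : z ≤ max T z := le_max_right _ _
      have hPmax : 0 < Pcub N p (max T z) := hlarge _ (le_max_left _ _)
      have hmem : (0:ℝ) ∈ Icc (Pcub N p z) (Pcub N p (max T z)) := ⟨le_of_lt hlt, le_of_lt hPmax⟩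
      obtain ⟨z', hz'mem, hz'root⟩ := intermediate_value_Icc hzT hcont.continuousOn hmem
      have hz'ne : z' ≠ z := fun hh => by rw [hh] at hz'root; linarith
      have hz'gt : z < z' := lt_of_le_of_ne hz'mem.1 (Ne.symm hz'ne)
      have := huniq z' z0 (lt_trans (lt_trans hz0pos hz) hz'gt) hz0pos hz'root hz0root
      linarith
    · have := huniq z z0 (lt_trans hz0pos hz) hz0pos heq hz0root
      linarith
  -- sign on the left of z0
  have hneg : ∀ z, 0 < z → z < z0 → Pcub N p z < 0 := by
    intro z hzp hz
    by_contra h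
    push_neg at h
    rcases h.lt_or_eq with hlt | heq
    · have hmem : (0:ℝ) ∈ Icc (Pcub N p 0) (Pcub N p z) :=
        ⟨by rw [hP0]; linarith, le_of_lt hlt⟩
      obtain ⟨z'', hz''mem, hz''root⟩ := intermediate_value_Icc (le_of_lt hzp) hcont.continuousOn hmem
      have hz''pos : 0 < z'' := by
        rcases hz''mem.1.lt_or_eq with hh | hh
        · exact hh
        · exfalso; rw [← hh, hP0] at hz''root; linarith
      have := huniq z'' z0 hz''pos hz0pos hz''root hz0root
      linarith [hz''mem.2]
    · have := huniq z z0 hzp hz0pos heq.symm hz0root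
      linarith
  refine ⟨hM3, ⟨z0, ⟨hz0pos, hz0root⟩, ?_⟩, 1/z0, by positivity, ?_, ?_⟩
  · rintro z ⟨hzpos, hzroot⟩
    exact huniq z z0 hzpos hz0pos hzroot hz0root
  · intro r hr hr'
    apply hpos
    rw [lt_div_iff₀ hr]
    have := (lt_div_iff₀ hz0pos).mp hr'
    nlinarith
  · intro r hr
    have hrpos : 0 < r := lt_trans (by positivity) hr
    apply hneg _ (by positivity)
    rw [div_lt_iff₀ hrpos]
    have := (div_lt_iff₀ hz0pos).mp hr
    nlinarith
end

section
/- Let N ≥ 2 be an integer and p ∈ (2N/(N+1), 2). The unique solution ψ ∈ C¹([0,∞)) of the ODE (|ψ'|^{p-2}ψ')'(s) + ((N-1)/s)(|ψ'|^{p-2}ψ')(s) + ψ(s) = 0 for s > 0 with ψ(0) = 1 and ψ'(0) = 0 (and with s ↦ |ψ'(s)|^{p-2}ψ'(s) of class C¹ on [0,∞)) has a first positive zero: there exists s_0 ∈ (0,∞) such that ψ(s_0) = 0, ψ'(s_0) < 0, and ψ'(s) < 0 < ψ(s) for all s ∈ (0,s_0). -/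
/-!
Multiplied by `s ^ (N - 1)`, the equation says that the flux `w = s ^ (N - 1) |ψ'| ^ (p - 2) ψ'`
satisfies `w' = -s ^ (N - 1) ψ`. Hence `w < 0`, and so `ψ' < 0`, as long as `ψ` stays positive.

Suppose `ψ > 0` on all of `(0, ∞)` and put `q = 1 / (p - 1) > 1`. Comparing `w r` with `w (r / 2)`
gives `-ψ' ≥ c (r ψ) ^ q`, so `(ψ ^ (1 - q))' ≥ c' r ^ q` and `ψ ^ (1 - q)` grows at least like
`s ^ (q + 1)`. On the other hand `w ≤ w 1 < 0` on `[1, ∞)` gives `-ψ' ≥ c'' t ^ (-(N - 1) q)`, so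
`ψ s ≥ ψ s - ψ (2 s)` is at least of order `s ^ (1 - (N - 1) q)`. The two rates are incompatible
exactly when `(N - 1) q < N + 1`, that is `p > 2N / (N + 1)`. The first zero is the infimum of the
zero set of `ψ`.
-/

open Real Set Filter MeasureTheory

/-- `ψ` solves `(|ψ'|^{p-2}ψ')' + ((N-1)/s)(|ψ'|^{p-2}ψ') + ψ = 0` on `(0,∞)` with
`ψ(0) = 1`, `ψ'(0) = 0`, in the class C¹ with `s ↦ |ψ'(s)|^{p-2}ψ'(s)` also C¹ on `[0,∞)`. -/
def IsPsiSol (N : ℕ) (p : ℝ) (ψ ψ' Ψ' : ℝ → ℝ) : Prop :=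
  (∀ s ∈ Ici (0:ℝ), HasDerivWithinAt ψ (ψ' s) (Ici 0) s) ∧
  ContinuousOn ψ' (Ici 0) ∧
  (∀ s ∈ Ici (0:ℝ), HasDerivWithinAt (fun t => |ψ' t| ^ (p - 2) * ψ' t) (Ψ' s) (Ici 0) s) ∧
  ContinuousOn Ψ' (Ici 0) ∧
  (∀ s, 0 < s → Ψ' s + (((N : ℝ) - 1) / s) * (|ψ' s| ^ (p - 2) * ψ' s) + ψ s = 0) ∧
  ψ 0 = 1 ∧ ψ' 0 = 0

lemma neg_of_abs_rpow_mul_neg {a x : ℝ} (h : |x| ^ a * x < 0) : x < 0 := by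
  by_contra! hx
  exact h.not_ge (mul_nonneg (rpow_nonneg (abs_nonneg x) a) hx)

lemma rpow_inv_le_neg_of_le_neg_abs_rpow_mul {p A x : ℝ} (hp : 1 < p) (hx : x < 0)
    (hA : 0 ≤ A) (h : A ≤ -(|x| ^ (p - 2) * x)) : A ^ (p - 1)⁻¹ ≤ -x := by
  have hflux : -(|x| ^ (p - 2) * x) = (-x) ^ (p - 1) := by
    rw [abs_of_neg hx, show p - 1 = p - 2 + 1 by ring, rpow_add_one (by linarith)]
    ring
  calc A ^ (p - 1)⁻¹ ≤ ((-x) ^ (p - 1)) ^ (p - 1)⁻¹ :=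
        rpow_le_rpow hA (hflux ▸ h) (inv_nonneg.2 (by linarith))
    _ = -x := rpow_rpow_inv (by linarith) (by linarith)

lemma mul_rpow_le_rpow_one_sub_of_le_neg_deriv {u u' : ℝ → ℝ} {q κ : ℝ} (hq : 1 < q)
    (hu : ContinuousOn u (Ici 0)) (hpos : ∀ x ∈ Ici (0 : ℝ), 0 < u x)
    (hderiv : ∀ x, 0 < x → HasDerivAt u (u' x) x)
    (hle : ∀ x, 0 < x → κ * (x * u x) ^ q ≤ -u' x) {x : ℝ} (hx : 0 ≤ x) :
    (q - 1) * κ / (q + 1) * x ^ (q + 1) ≤ u x ^ (1 - q) := by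
  set B := (q - 1) * κ / (q + 1) with hB
  have hmono : MonotoneOn (fun x => u x ^ (1 - q) - B * x ^ (q + 1)) (Ici 0) := by
    refine monotoneOn_of_hasDerivWithinAt_nonneg (convex_Ici 0)
      (f' := fun x => u' x * (1 - q) * u x ^ (1 - q - 1) - B * ((q + 1) * x ^ (q + 1 - 1)))
      ((hu.rpow_const fun x hx => Or.inl (hpos x hx).ne').sub
        (continuousOn_const.mul (continuous_rpow_const (by linarith)).continuousOn)) ?_ ?_
      <;> rw [interior_Ici]
    · intro x (hx : 0 < x)
      exact (((hderiv x hx).rpow_const (Or.inl (hpos x hx.le).ne')).sub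
        ((hasDerivAt_rpow_const (Or.inl hx.ne')).const_mul B)).hasDerivWithinAt
    · intro x (hx : 0 < x)
      have hux := hpos x hx.le
      have key : κ * x ^ q ≤ u x ^ (-q) * -u' x :=
        calc κ * x ^ q = u x ^ (-q) * (κ * (x * u x) ^ q) := by
              rw [mul_rpow hx.le hux.le, rpow_neg hux.le]
              field_simp [(rpow_pos_of_pos hux q).ne']
          _ ≤ u x ^ (-q) * -u' x := mul_le_mul_of_nonneg_left (hle x hx) (rpow_nonneg hux.le _)
      have hBq : B * (q + 1) = (q - 1) * κ := by rw [hB]; field_simp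
      rw [show 1 - q - 1 = -q by ring, show q + 1 - 1 = q by ring,
        show u' x * (1 - q) * u x ^ (-q) - B * ((q + 1) * x ^ q)
          = (q - 1) * (u x ^ (-q) * -u' x - κ * x ^ q) by linear_combination (-x ^ q) * hBq]
      exact mul_nonneg (by linarith) (sub_nonneg.2 key)
  have h0 := hmono self_mem_Ici hx hx
  simp only [zero_rpow (by linarith : q + 1 ≠ 0), mul_zero, sub_zero] at h0
  linarith [rpow_pos_of_pos (hpos 0 self_mem_Ici) (1 - q)]

lemma mul_rpow_le_of_mul_rpow_le_neg_deriv {u u' : ℝ → ℝ} {C b : ℝ} (hC : 0 ≤ C) (hb : b ≤ 0)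
    (hu : ContinuousOn u (Ici 1)) (hpos : ∀ x, 1 ≤ x → 0 < u x)
    (hderiv : ∀ x, 1 < x → HasDerivAt u (u' x) x)
    (hle : ∀ x, 1 < x → C * x ^ b ≤ -u' x) {s : ℝ} (hs : 1 ≤ s) :
    C * 2 ^ b * s ^ (b + 1) ≤ u s := by
  have hs0 : 0 < s := by linarith
  obtain ⟨c, hc, hslope⟩ := exists_hasDerivAt_eq_slope u u' (by linarith : s < 2 * s)
    (hu.mono fun x hx => hs.trans hx.1) fun x hx => hderiv x (by linarith [hx.1])
  have hc0 : 0 < c := hs0.trans hc.1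
  have hdrop : u s - u (2 * s) = -u' c * s := by
    rw [hslope]; field_simp; ring
  have hbound : C * (2 * s) ^ b ≤ -u' c :=
    (mul_le_mul_of_nonneg_left (rpow_le_rpow_of_nonpos hc0 hc.2.le hb) hC).trans
      (hle c (by linarith [hc.1]))
  have hpow : (2 * s) ^ b * s = 2 ^ b * s ^ (b + 1) := by
    rw [mul_rpow (by norm_num) hs0.le, rpow_add_one hs0.ne']; ring
  nlinarith [mul_le_mul_of_nonneg_right hbound hs0.le, hpos (2 * s) (by linarith)]

lemma false_of_rpow_le_of_rpow_le_rpow_one_sub {u : ℝ → ℝ} {q a c A B : ℝ} (hq : 1 < q)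
    (hA : 0 < A) (hB : 0 < B) (hexp : 0 < c + (q - 1) * a)
    (hlow : ∀ s, 1 ≤ s → A * s ^ a ≤ u s) (hup : ∀ s, 1 ≤ s → B * s ^ c ≤ u s ^ (1 - q)) :
    False := by
  obtain ⟨s, hbig, hs⟩ := ((((tendsto_rpow_atTop hexp).const_mul_atTop hB).eventually_gt_atTop
    (A ^ (1 - q))).and (eventually_ge_atTop 1)).exists
  have hs0 : 0 < s := by linarith
  have hcomb : B * s ^ c ≤ A ^ (1 - q) * s ^ (a * (1 - q)) := by
    rw [rpow_mul hs0.le, ← mul_rpow hA.le (rpow_nonneg hs0.le _)]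
    exact (hup s hs).trans (rpow_le_rpow_of_nonpos (by positivity) (hlow s hs) (by linarith))
  have hsplit : s ^ (c + (q - 1) * a) = s ^ c * s ^ (a * (q - 1)) := by
    rw [rpow_add hs0]; ring_nf
  have hcancel : s ^ (a * (1 - q)) * s ^ (a * (q - 1)) = 1 := by
    rw [← rpow_add hs0]; ring_nf; exact rpow_zero s
  have hfinal := mul_le_mul_of_nonneg_right hcomb (rpow_nonneg hs0.le (a * (q - 1)))
  rw [mul_assoc _ (s ^ (a * (1 - q))), hcancel, mul_one, mul_assoc, ← hsplit] at hfinal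
  linarith

lemma exists_first_zero_of_continuousOn {f : ℝ → ℝ} {a b : ℝ} (hab : a ≤ b)
    (hf : ContinuousOn f (Icc a b)) (ha : 0 < f a) (hb : f b ≤ 0) :
    ∃ c ∈ Ioc a b, f c = 0 ∧ ∀ x ∈ Ico a c, 0 < f x := by
  set Z := Icc a b ∩ f ⁻¹' Iic 0
  have hZbdd : BddBelow Z := ⟨a, fun x hx => hx.1.1⟩
  have hcZ : sInf Z ∈ Z := (hf.preimage_isClosed_of_isClosed isClosed_Icc isClosed_Iic).csInf_mem
    ⟨b, right_mem_Icc.2 hab, hb⟩ hZbdd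
  have hpos : ∀ x ∈ Ico a (sInf Z), 0 < f x := fun x hx => by
    by_contra! h
    exact hx.2.not_ge (csInf_le hZbdd ⟨⟨hx.1, hx.2.le.trans hcZ.1.2⟩, h⟩)
  have hac : a < sInf Z := hcZ.1.1.lt_of_ne fun h => (h ▸ ha).not_ge hcZ.2
  obtain ⟨z, hz, hfz⟩ := intermediate_value_Icc' hac.le (hf.mono (Icc_subset_Icc_right hcZ.1.2))
    ⟨hcZ.2, ha.le⟩
  obtain rfl : z = sInf Z := by_contra fun hne => (hpos z ⟨hz.1, hz.2.lt_of_ne hne⟩).ne' hfz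
  exact ⟨_, ⟨hac, hcZ.1.2⟩, hfz, hpos⟩

noncomputable def radialFlux (N : ℕ) (p : ℝ) (ψ' : ℝ → ℝ) (s : ℝ) : ℝ :=
  s ^ ((N : ℝ) - 1) * (|ψ' s| ^ (p - 2) * ψ' s)

lemma rpow_inv_le_neg_of_radialFlux_le {N : ℕ} {p A s : ℝ} {ψ' : ℝ → ℝ} (hp : 1 < p)
    (hs : 0 < s) (hneg : ψ' s < 0) (hA : 0 ≤ A)
    (h : radialFlux N p ψ' s ≤ -(s ^ ((N : ℝ) - 1) * A)) : A ^ (p - 1)⁻¹ ≤ -ψ' s := by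
  refine rpow_inv_le_neg_of_le_neg_abs_rpow_mul hp hneg hA ?_
  have hw : s ^ ((N : ℝ) - 1) * A ≤ s ^ ((N : ℝ) - 1) * -(|ψ' s| ^ (p - 2) * ψ' s) := by
    unfold radialFlux at h; linarith
  exact le_of_mul_le_mul_left hw (rpow_pos_of_pos hs _)

namespace IsPsiSol

variable {N : ℕ} {p : ℝ} {ψ ψ' Ψ' : ℝ → ℝ}

lemma continuousOn (h : IsPsiSol N p ψ ψ' Ψ') : ContinuousOn ψ (Ici 0) :=
  fun s hs => (h.1 s hs).continuousWithinAt

lemma hasDerivAt (h : IsPsiSol N p ψ ψ' Ψ') {s : ℝ} (hs : 0 < s) : HasDerivAt ψ (ψ' s) s :=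
  (h.1 s hs.le).hasDerivAt (Ici_mem_nhds hs)

lemma hasDerivAt_radialFlux (h : IsPsiSol N p ψ ψ' Ψ') {s : ℝ} (hs : 0 < s) :
    HasDerivAt (radialFlux N p ψ') (-(s ^ ((N : ℝ) - 1) * ψ s)) s := by
  refine ((hasDerivAt_rpow_const (p := (N : ℝ) - 1) (Or.inl hs.ne')).mul
    ((h.2.2.1 s hs.le).hasDerivAt (Ici_mem_nhds hs))).congr_deriv ?_
  rw [rpow_sub_one hs.ne']
  linear_combination s ^ ((N : ℝ) - 1) * h.2.2.2.2.1 s hs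

lemma continuousOn_radialFlux (h : IsPsiSol N p ψ ψ' Ψ') (hN : 1 ≤ N) :
    ContinuousOn (radialFlux N p ψ') (Ici 0) :=
  (continuous_rpow_const (by simpa using hN)).continuousOn.mul
    fun s hs => (h.2.2.1 s hs).continuousWithinAt

lemma radialFlux_zero (h : IsPsiSol N p ψ ψ' Ψ') : radialFlux N p ψ' 0 = 0 := by
  simp [radialFlux, h.2.2.2.2.2.2]

lemma strictAntiOn_radialFlux (h : IsPsiSol N p ψ ψ' Ψ') (hN : 1 ≤ N) {b : ℝ}
    (hpos : ∀ t ∈ Ioo 0 b, 0 < ψ t) : StrictAntiOn (radialFlux N p ψ') (Icc 0 b) := by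
  refine strictAntiOn_of_hasDerivWithinAt_neg (f' := fun t => -(t ^ ((N : ℝ) - 1) * ψ t))
    (convex_Icc 0 b) ((h.continuousOn_radialFlux hN).mono Icc_subset_Ici_self) ?_ ?_
    <;> rw [interior_Icc]
  · exact fun t ht => (h.hasDerivAt_radialFlux ht.1).hasDerivWithinAt
  · exact fun t ht => neg_neg_of_pos (mul_pos (rpow_pos_of_pos ht.1 _) (hpos t ht))

lemma radialFlux_neg (h : IsPsiSol N p ψ ψ' Ψ') (hN : 1 ≤ N) {s : ℝ} (hs : 0 < s)
    (hpos : ∀ t ∈ Ioo 0 s, 0 < ψ t) : radialFlux N p ψ' s < 0 := by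
  simpa [h.radialFlux_zero] using h.strictAntiOn_radialFlux hN hpos (left_mem_Icc.2 hs.le)
    (right_mem_Icc.2 hs.le) hs

lemma deriv_neg (h : IsPsiSol N p ψ ψ' Ψ') (hN : 1 ≤ N) {s : ℝ} (hs : 0 < s)
    (hpos : ∀ t ∈ Ioo 0 s, 0 < ψ t) : ψ' s < 0 :=
  neg_of_abs_rpow_mul_neg <|
    neg_of_mul_neg_right (h.radialFlux_neg hN hs hpos) (rpow_nonneg hs.le _)

section PositiveSolution

variable (h : IsPsiSol N p ψ ψ' Ψ') (hN : 1 ≤ N) (H : ∀ s, 0 < s → 0 < ψ s)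
include h hN H

lemma strictAntiOn_of_pos : StrictAntiOn ψ (Ici 0) := by
  refine strictAntiOn_of_hasDerivWithinAt_neg (f' := ψ') (convex_Ici 0) h.continuousOn ?_ ?_
    <;> rw [interior_Ici]
  · exact fun s hs => (h.hasDerivAt hs).hasDerivWithinAt
  · exact fun s hs => h.deriv_neg hN hs fun t ht => H t ht.1

lemma radialFlux_le_of_pos {r : ℝ} (hr : 0 < r) :
    radialFlux N p ψ' r ≤ -(r ^ ((N : ℝ) - 1) * ((1 / 2) ^ (N : ℝ) * (r * ψ r))) := by
  have hr2 : 0 < r / 2 := by positivity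
  obtain ⟨c, hc, hslope⟩ := exists_hasDerivAt_eq_slope (radialFlux N p ψ') _
    (by linarith : r / 2 < r) ((h.continuousOn_radialFlux hN).mono fun t ht => hr2.le.trans ht.1)
    fun t ht => h.hasDerivAt_radialFlux (hr2.trans ht.1)
  have hc0 : 0 < c := hr2.trans hc.1
  have hdrop : radialFlux N p ψ' r
      = radialFlux N p ψ' (r / 2) - c ^ ((N : ℝ) - 1) * ψ c * (r / 2) := by
    rw [eq_div_iff (by linarith)] at hslope
    linarith
  have hmono : (r / 2) ^ ((N : ℝ) - 1) * ψ r ≤ c ^ ((N : ℝ) - 1) * ψ c :=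
    mul_le_mul (rpow_le_rpow hr2.le hc.1.le (by simpa using hN))
      ((h.strictAntiOn_of_pos hN H).antitoneOn hc0.le hr.le hc.2.le) (H r hr).le
      (rpow_nonneg hc0.le _)
  have hhalf : (r / 2) ^ ((N : ℝ) - 1) * ψ r * (r / 2)
      = r ^ ((N : ℝ) - 1) * ((1 / 2) ^ (N : ℝ) * (r * ψ r)) := by
    rw [div_eq_mul_one_div r 2, mul_rpow hr.le (by norm_num),
      rpow_sub_one (show (1 / 2 : ℝ) ≠ 0 by norm_num)]
    ring
  nlinarith [mul_le_mul_of_nonneg_right hmono hr2.le,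
    h.radialFlux_neg hN hr2 fun t ht => H t ht.1]

lemma mul_rpow_le_neg_deriv_of_pos (hp : 1 < p) {r : ℝ} (hr : 0 < r) :
    ((1 / 2) ^ (N : ℝ)) ^ (p - 1)⁻¹ * (r * ψ r) ^ (p - 1)⁻¹ ≤ -ψ' r := by
  rw [← mul_rpow (by positivity) (mul_pos hr (H r hr)).le]
  exact rpow_inv_le_neg_of_radialFlux_le hp hr (h.deriv_neg hN hr fun t ht => H t ht.1)
    (by have := H r hr; positivity) (h.radialFlux_le_of_pos hN H hr)

lemma rpow_mul_rpow_le_neg_deriv_of_pos (hp : 1 < p) {t : ℝ} (ht : 1 ≤ t) :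
    (-radialFlux N p ψ' 1) ^ (p - 1)⁻¹ * t ^ (-((N : ℝ) - 1) * (p - 1)⁻¹) ≤ -ψ' t := by
  have ht0 : 0 < t := by linarith
  have hδ : 0 < -radialFlux N p ψ' 1 :=
    neg_pos.2 (h.radialFlux_neg hN one_pos fun u hu => H u hu.1)
  have hle : radialFlux N p ψ' t
      ≤ -(t ^ ((N : ℝ) - 1) * (-radialFlux N p ψ' 1 * t ^ (-((N : ℝ) - 1)))) := by
    rw [rpow_neg ht0.le, mul_left_comm, mul_inv_cancel₀ (rpow_pos_of_pos ht0 _).ne', mul_one,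
      neg_neg]
    exact (h.strictAntiOn_radialFlux hN fun u hu => H u hu.1).antitoneOn
      ⟨zero_le_one, ht⟩ (right_mem_Icc.2 ht0.le) ht
  have := rpow_inv_le_neg_of_radialFlux_le hp ht0 (h.deriv_neg hN ht0 fun u hu => H u hu.1)
    (by positivity) hle
  rwa [mul_rpow hδ.le (rpow_nonneg ht0.le _), ← rpow_mul ht0.le] at this

end PositiveSolution

theorem exists_nonpos (h : IsPsiSol N p ψ ψ' Ψ') (hN : 1 ≤ N)
    (hp1 : 2 * (N : ℝ) / ((N : ℝ) + 1) < p) (hp2 : p < 2) : ∃ s, 0 < s ∧ ψ s ≤ 0 := by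
  by_contra! H
  have hN1 : (1 : ℝ) ≤ N := by exact_mod_cast hN
  have hpN : 2 * (N : ℝ) < p * (N + 1) := by rwa [div_lt_iff₀ (by positivity)] at hp1
  have hp : 1 < p := by nlinarith
  set q := (p - 1)⁻¹ with hq_def
  have hq : 1 < q := (one_lt_inv₀ (by linarith)).2 (by linarith)
  have hqN : ((N : ℝ) - 1) * q < N + 1 := by
    rw [hq_def, ← div_eq_mul_inv, div_lt_iff₀ (by linarith)]
    nlinarith
  have hδ : 0 < -radialFlux N p ψ' 1 :=
    neg_pos.2 (h.radialFlux_neg hN one_pos fun u hu => H u hu.1)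
  have hψpos : ∀ x ∈ Ici (0 : ℝ), 0 < ψ x := fun x hx =>
    hx.eq_or_lt.elim (fun hx0 => by rw [← hx0, h.2.2.2.2.2.1]; exact one_pos) (H x)
  have hlow : ∀ s, 1 ≤ s →
      (-radialFlux N p ψ' 1) ^ q * 2 ^ (-((N : ℝ) - 1) * q) * s ^ (-((N : ℝ) - 1) * q + 1)
        ≤ ψ s := fun s hs =>
    mul_rpow_le_of_mul_rpow_le_neg_deriv (by positivity) (by nlinarith)
      (h.continuousOn.mono (Ici_subset_Ici.2 zero_le_one)) (fun x hx => H x (by linarith))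
      (fun x hx => h.hasDerivAt (by linarith))
      (fun x hx => h.rpow_mul_rpow_le_neg_deriv_of_pos hN H hp hx.le) hs
  have hup : ∀ s, 1 ≤ s → (q - 1) * ((1 / 2) ^ (N : ℝ)) ^ q / (q + 1) * s ^ (q + 1)
      ≤ ψ s ^ (1 - q) := fun s hs =>
    mul_rpow_le_rpow_one_sub_of_le_neg_deriv hq h.continuousOn hψpos
      (fun x hx => h.hasDerivAt hx) (fun x hx => h.mul_rpow_le_neg_deriv_of_pos hN H hp hx)
      (by linarith)
  exact false_of_rpow_le_of_rpow_le_rpow_one_sub hq (by positivity)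
    (div_pos (mul_pos (by linarith) (by positivity)) (by linarith))
    (by nlinarith [mul_pos (by linarith : (0 : ℝ) < q) (by linarith : 0 < N + 1 - (N - 1) * q)])
    hlow hup

end IsPsiSol

/-- the solution `ψ` has a first positive zero `s₀` with `ψ'(s₀) < 0` and
`ψ' < 0 < ψ` on `(0, s₀)`. -/
theorem stmt19 (N : ℕ) (hN : 2 ≤ N) (p : ℝ)
    (hp1 : 2 * (N : ℝ) / ((N : ℝ) + 1) < p) (hp2 : p < 2)
    (ψ ψ' Ψ' : ℝ → ℝ) (hψ : IsPsiSol N p ψ ψ' Ψ') :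
    ∃ s₀ : ℝ, 0 < s₀ ∧ ψ s₀ = 0 ∧ ψ' s₀ < 0 ∧
      ∀ s, 0 < s → s < s₀ → ψ' s < 0 ∧ 0 < ψ s := by
  have hN1 : 1 ≤ N := by omega
  obtain ⟨s₁, hs₁, hψs₁⟩ := hψ.exists_nonpos hN1 hp1 hp2
  obtain ⟨s₀, ⟨hs₀, -⟩, hzero, hfirst⟩ := exists_first_zero_of_continuousOn hs₁.le
    (hψ.continuousOn.mono Icc_subset_Ici_self) (by rw [hψ.2.2.2.2.2.1]; exact one_pos) hψs₁
  have hpos : ∀ s ∈ Ioo 0 s₀, 0 < ψ s := fun s hs => hfirst s ⟨hs.1.le, hs.2⟩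
  refine ⟨s₀, hs₀, hzero, hψ.deriv_neg hN1 hs₀ hpos, fun s hs hss₀ => ⟨?_, hpos s ⟨hs, hss₀⟩⟩⟩
  exact hψ.deriv_neg hN1 hs fun t ht => hpos t ⟨ht.1, ht.2.trans hss₀⟩
end
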